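/- arXiv:2412.04145 — 2 statements merged into one kernel-verified Lean document; each statement's English description precedes it below -/
import Mathlib

section
/- Let (T,β) be a tree decomposition of a graph G, let Z ⊆ V(G), let π : V(G) → V(G/Z) be the quotient map of the contraction of G to G/Z, and let (T,β*) be the induced tree decomposition of G/Z where β*(t) = π(β(t)). Then for every node t of T, the adhesion in (T,β*) satisfies σ*(t) = π(σ(t)), where σ(t) is the adhesion of t in (T,β). -/
/-- A rooted tree decomposition of a graph `G`.  The rooted tree on the index type `ι` is
given by a parent function together with a root which every node reaches by iterating
`parent`.  The bags satisfy the usual covering, edge and (subtree-)connectivity axioms;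
the connectivity axiom is phrased for rooted trees: if `v` lies in the bag of `t` but not
in the bag of its parent (and `t` is not the root), then every node whose bag contains `v`
is a descendant of `t`. -/
structure RootedTreeDecomp (V : Type*) (ι : Type*) (G : SimpleGraph V) where
  parent : ι → ι
  root : ι
  parent_root : parent root = root
  reaches_root : ∀ t : ι, ∃ n : ℕ, parent^[n] t = root
  bag : ι → Set V
  bag_cover : ∀ v : V, ∃ t : ι, v ∈ bag t
  bag_edge : ∀ ⦃u v : V⦄, G.Adj u v → ∃ t : ι, u ∈ bag t ∧ v ∈ bag t
  bag_conn : ∀ (v : V) (t : ι), v ∈ bag t → t ≠ root → v ∉ bag (parent t) →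
      ∀ s : ι, v ∈ bag s → ∃ n : ℕ, parent^[n] s = t

namespace RootedTreeDecomp

variable {V ι : Type*} {G : SimpleGraph V}

open Classical

/-- The adhesion `σ(t) = β(t) ∩ β(parent t)`, with `σ(root) = ∅`. -/
noncomputable def adhesion (D : RootedTreeDecomp V ι G) (t : ι) : Set V :=
  if t = D.root then ∅ else D.bag t ∩ D.bag (D.parent t)

/-- `s` is a child of `t` in the rooted tree. -/
def IsChild (D : RootedTreeDecomp V ι G) (s t : ι) : Prop :=
  s ≠ D.root ∧ D.parent s = t

/-- The set `γ(t)`: the union of the bags over the subtree rooted at `t`. -/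
def subtreeBags (D : RootedTreeDecomp V ι G) (t : ι) : Set V :=
  ⋃ s ∈ {s : ι | ∃ n : ℕ, D.parent^[n] s = t}, D.bag s

/-- The torso of a node `t`: the graph on the bag `β(t)` (as a graph with vertex set `V`,
with all edges inside `β(t)`) obtained from `G[β(t)]` by making the adhesion `σ(s)` of every
child `s` of `t` into a clique. -/
def torso (D : RootedTreeDecomp V ι G) (t : ι) : SimpleGraph V where
  Adj u v := u ≠ v ∧ u ∈ D.bag t ∧ v ∈ D.bag t ∧
    (G.Adj u v ∨ ∃ s : ι, D.IsChild s t ∧ u ∈ D.adhesion s ∧ v ∈ D.adhesion s)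
  symm := ⟨by
    rintro u v ⟨hne, hu, hv, h⟩
    refine ⟨hne.symm, hv, hu, ?_⟩
    rcases h with h | ⟨s, hs, h1, h2⟩
    · exact Or.inl h.symm
    · exact Or.inr ⟨s, hs, h2, h1⟩⟩
  loopless := ⟨fun u h => h.1 rfl⟩

end RootedTreeDecomp

/-- `u` and `v` lie in the same connected component of `G[Z]`. -/
def ReachIn {V : Type*} (G : SimpleGraph V) (Z : Set V) (u v : V) : Prop :=
  ∃ (hu : u ∈ Z) (hv : v ∈ Z), (G.induce Z).Reachable ⟨u, hu⟩ ⟨v, hv⟩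

/-- `G'` is obtained from `G` by contracting edges, with quotient map `π` : `π` is
surjective, each fibre induces a connected subgraph of `G`, and two distinct vertices of
`G'` are adjacent exactly when some edge of `G` joins the corresponding fibres. -/
def IsContraction {V V' : Type*} (G : SimpleGraph V) (G' : SimpleGraph V') (π : V → V') :
    Prop :=
  Function.Surjective π ∧
  (∀ a : V', (G.induce (π ⁻¹' {a})).Connected) ∧
  (∀ a b : V', G'.Adj a b ↔ a ≠ b ∧ ∃ u v : V, G.Adj u v ∧ π u = a ∧ π v = b)

/-- `G'` is the graph `G/Z` obtained from `G` by contracting every connected component of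
`G[Z]` to a single vertex, with quotient map `π`: additionally to being a contraction, `π`
identifies two vertices exactly when they coincide or lie in the same connected component
of `G[Z]`. -/
def IsComponentContraction {V V' : Type*} (G : SimpleGraph V) (Z : Set V)
    (G' : SimpleGraph V') (π : V → V') : Prop :=
  Function.Surjective π ∧
  (∀ u v : V, π u = π v ↔ u = v ∨ ReachIn G Z u v) ∧
  (∀ a b : V', G'.Adj a b ↔ a ≠ b ∧ ∃ u v : V, G.Adj u v ∧ π u = a ∧ π v = b)

/-!
Contracting the components of `G[Z]` can only add to the adhesion `π(β(t)) ∩ π(β(t'))` when some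
`u ∈ β(t)` and `v ∈ β(t')` are joined by a walk in `G[Z]`. Since `β(t) ∩ β(t')` separates the bags
of the subtree below `t` from the remaining bags, that walk passes through a vertex `w` of
`σ(t)`, and `π w = π u` because `w` lies in the component of `G[Z]` containing `u`.
-/

namespace RootedTreeDecomp

variable {V ι : Type*} {G : SimpleGraph V} (D : RootedTreeDecomp V ι G)

def IsDescendant (s t : ι) : Prop :=
  ∃ n : ℕ, D.parent^[n] s = t

theorem iterate_parent_root (n : ℕ) : D.parent^[n] D.root = D.root :=
  Function.iterate_fixed D.parent_root n

variable {D}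

theorem adhesion_of_ne_root {t : ι} (ht : t ≠ D.root) :
    D.adhesion t = D.bag t ∩ D.bag (D.parent t) :=
  if_neg ht

/-- The parent pointers contain no cycle, since every node reaches the fixed point `root`. -/
theorem not_isDescendant_parent {t : ι} (ht : t ≠ D.root) :
    ¬ D.IsDescendant (D.parent t) t := by
  rintro ⟨n, hn⟩
  obtain ⟨m, hm⟩ := D.reaches_root t
  have hper : Function.IsPeriodicPt D.parent ((n + 1) * m) t :=
    (show Function.IsPeriodicPt D.parent (n + 1) t by
      rwa [Function.IsPeriodicPt, Function.IsFixedPt, Function.iterate_succ_apply]).mul_const m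
  have hle : m ≤ (n + 1) * m := Nat.le_mul_of_pos_left m n.succ_pos
  apply ht
  calc t = D.parent^[(n + 1) * m] t := hper.eq.symm
    _ = D.parent^[(n + 1) * m - m] (D.parent^[m] t) := by
      rw [← Function.iterate_add_apply, Nat.sub_add_cancel hle]
    _ = D.root := by rw [hm, iterate_parent_root]

/-- Climbing from `s'` to `t`, the vertex `v` can never leave the bags: leaving at some `s''`
would force every bag containing `v`, in particular `β(s)`, into the subtree below `s''`. -/
theorem mem_bag_of_isDescendant {t s' s : ι} {v : V} (ht : t ≠ D.root)
    (hs' : D.IsDescendant s' t) (hvs' : v ∈ D.bag s')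
    (hs : ¬ D.IsDescendant s t) (hvs : v ∈ D.bag s) : v ∈ D.bag t := by
  obtain ⟨n, hn⟩ := hs'
  induction n generalizing s' with
  | zero => rwa [← hn]
  | succ n ih =>
    have hroot : s' ≠ D.root := by
      rintro rfl
      exact ht (hn.symm.trans (iterate_parent_root D _))
    by_cases hvp : v ∈ D.bag (D.parent s')
    · exact ih hvp (by rwa [← Function.iterate_succ_apply])
    · obtain ⟨m, hm⟩ := D.bag_conn v s' hvs' hroot hvp s hvs
      exact absurd ⟨n + 1 + m, by rw [Function.iterate_add_apply, hm, hn]⟩ hs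

theorem mem_adhesion_of_isDescendant_of_not_isDescendant {t s' s : ι} {v : V}
    (ht : t ≠ D.root) (hs' : D.IsDescendant s' t) (hvs' : v ∈ D.bag s')
    (hs : ¬ D.IsDescendant s t) (hvs : v ∈ D.bag s) : v ∈ D.adhesion t := by
  have hvt := mem_bag_of_isDescendant ht hs' hvs' hs hvs
  rw [adhesion_of_ne_root ht]
  refine ⟨hvt, ?_⟩
  by_contra hvp
  exact hs (D.bag_conn v t hvt ht hvp s hvs)

theorem exists_mem_support_mem_adhesion {t : ι} (ht : t ≠ D.root) {u v : V} (p : G.Walk u v)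
    (hu : ∃ s, D.IsDescendant s t ∧ u ∈ D.bag s)
    (hv : ∃ s, ¬ D.IsDescendant s t ∧ v ∈ D.bag s) :
    ∃ w ∈ p.support, w ∈ D.adhesion t := by
  induction p with
  | nil =>
    obtain ⟨s', hs', hus'⟩ := hu
    obtain ⟨s, hs, hus⟩ := hv
    exact ⟨_, List.mem_singleton_self _,
      mem_adhesion_of_isDescendant_of_not_isDescendant ht hs' hus' hs hus⟩
  | @cons u x v hadj p ih =>
    obtain ⟨s', hs', hus'⟩ := hu
    by_cases hout : ∃ s, ¬ D.IsDescendant s t ∧ u ∈ D.bag s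
    · obtain ⟨s, hs, hus⟩ := hout
      exact ⟨u, List.mem_cons_self,
        mem_adhesion_of_isDescendant_of_not_isDescendant ht hs' hus' hs hus⟩
    · obtain ⟨s'', hus'', hxs''⟩ := D.bag_edge hadj
      have hs'' : D.IsDescendant s'' t := not_not.mp fun h => hout ⟨s'', h, hus''⟩
      obtain ⟨w, hw, hwσ⟩ := ih ⟨s'', hs'', hxs''⟩ hv
      exact ⟨w, List.mem_cons_of_mem _ hw, hwσ⟩

end RootedTreeDecomp

/-- Let `(T,β)` be a tree decomposition of `G`, let `Z ⊆ V(G)`, let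
`π : V(G) → V(G/Z)` be the quotient map of the contraction of `G` to `G/Z`, and let
`(T,β*)` be the induced tree decomposition of `G/Z` with `β*(t) = π(β(t))` (same tree,
same root).  Then for every node `t`, the adhesion of `(T,β*)` satisfies
`σ*(t) = π(σ(t))`. -/
theorem induced_decomposition_adhesion_eq_image
    {V V' ι : Type*} {G : SimpleGraph V} (D : RootedTreeDecomp V ι G)
    (Z : Set V) (G' : SimpleGraph V') (π : V → V')
    (hc : IsComponentContraction G Z G' π)
    (D' : RootedTreeDecomp V' ι G')
    (hp : D'.parent = D.parent) (hr : D'.root = D.root)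
    (hb : ∀ t : ι, D'.bag t = π '' D.bag t) :
    ∀ t : ι, D'.adhesion t = π '' D.adhesion t := by
  classical
  intro t
  by_cases ht : t = D.root
  · simp only [RootedTreeDecomp.adhesion, ht, hr, if_true, Set.image_empty]
  have ht' : t ≠ D'.root := hr ▸ ht
  rw [RootedTreeDecomp.adhesion_of_ne_root ht', hb, hb, hp]
  refine Set.Subset.antisymm ?_ ?_
  · rintro a ⟨⟨u, hu, rfl⟩, v, hv, hvu⟩
    rcases (hc.2.1 u v).1 hvu.symm with rfl | ⟨huZ, _, ⟨p⟩⟩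
    · exact ⟨u, by rw [RootedTreeDecomp.adhesion_of_ne_root ht]; exact ⟨hu, hv⟩, rfl⟩
    obtain ⟨w, hw, hwσ⟩ := RootedTreeDecomp.exists_mem_support_mem_adhesion ht
      (p.map (SimpleGraph.Embedding.induce Z).toHom) ⟨t, ⟨0, rfl⟩, hu⟩
      ⟨D.parent t, RootedTreeDecomp.not_isDescendant_parent ht, hv⟩
    rw [SimpleGraph.Walk.support_map, List.mem_map] at hw
    obtain ⟨x, hx, rfl⟩ := hw
    exact ⟨x, hwσ, ((hc.2.1 u x).2 (Or.inr ⟨huZ, x.2, ⟨p.takeUntil x hx⟩⟩)).symm⟩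
  · rw [RootedTreeDecomp.adhesion_of_ne_root ht]
    exact Set.image_inter_subset _ _ _
end

section
/- Let (T,β) be a rooted tree decomposition of G, let Z₁,…,Z_p be a partition of V(G), fix i and Z' ⊆ Z_i, and suppose that for every node t and every edge uv of tor(t)[Z_i ∩ β(t)], the vertices u and v lie in the same connected component of G[((γ(s) \ σ(s)) ∩ Z_i) ∪ {u,v}] for every child s of t with u,v ∈ σ(s). If additionally adhesions have size at most h, then for every node t, the number of edges uv of tor(t)[(Z_i ∩ β(t)) \ Z'] whose endpoints lie in different connected components of G[Z_i \ Z'] is at most h² · |Z'|. -/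
/-- `u` and `v` lie in the same connected component of `G[A]`. -/
def SameComp {V : Type*} (G : SimpleGraph V) (A : Set V) (u v : V) : Prop :=
  ∃ (hu : u ∈ A) (hv : v ∈ A), (G.induce A).Reachable ⟨u, hu⟩ ⟨v, hv⟩

/-!
A torso edge `uv` that is not an edge of `G` comes from the clique on the adhesion `σ(s)` of
some child `s`. By hypothesis `u` and `v` are joined through `(γ(s) \ σ(s)) ∩ Z_i`, so if they
are separated in `G[Z_i \ Z']` then `Z'` meets `γ(s) \ σ(s)`: the child `s` is bad. The sets
`γ(s) \ σ(s)` of distinct children are disjoint, since a vertex outside `σ(s)` only occurs in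
bags below `s`; hence there are at most `|Z'|` bad children, each contributing at most `h²`
edges.
-/

theorem Function.exists_iterate_eq_or_exists_iterate_eq {α : Type*} (f : α → α) {w x y : α}
    {a b : ℕ} (hx : f^[a] w = x) (hy : f^[b] w = y) :
    (∃ k, f^[k] x = y) ∨ ∃ k, f^[k] y = x := by
  rcases le_total a b with hab | hba
  · obtain ⟨k, rfl⟩ := Nat.exists_eq_add_of_le' hab
    exact .inl ⟨k, by rw [← hx, ← Function.iterate_add_apply, hy]⟩
  · obtain ⟨k, rfl⟩ := Nat.exists_eq_add_of_le' hba
    exact .inr ⟨k, by rw [← hy, ← Function.iterate_add_apply, hx]⟩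

theorem Set.ncard_sym2_le {α : Type*} {s : Set α} (hs : s.Finite) :
    s.sym2.ncard ≤ s.ncard ^ 2 := by
  rw [Set.sym2_eq_mk_image, sq, ← Set.ncard_prod]
  exact Set.ncard_image_le (hs.prod hs)

theorem Set.Finite.ncard_biUnion_le_mul {ι α : Type*} {t : Set ι} (ht : t.Finite)
    {s : ι → Set α} {m : ℕ} (hs : ∀ i ∈ t, (s i).ncard ≤ m) :
    (⋃ i ∈ t, s i).ncard ≤ m * t.ncard := by
  calc (⋃ i ∈ t, s i).ncard = (⋃ i ∈ ht.toFinset, s i).ncard := by simp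
    _ ≤ ∑ i ∈ ht.toFinset, (s i).ncard := ht.toFinset.set_ncard_biUnion_le s
    _ ≤ ht.toFinset.card • m := Finset.sum_le_card_nsmul _ _ _ (by simpa using hs)
    _ = m * t.ncard := by rw [smul_eq_mul, mul_comm, Set.ncard_eq_toFinset_card t ht]

theorem SameComp.mono {V : Type*} {G : SimpleGraph V} {A B : Set V} {u v : V} (hAB : A ⊆ B)
    (h : SameComp G A u v) : SameComp G B u v := by
  obtain ⟨hu, hv, hr⟩ := h
  exact ⟨hAB hu, hAB hv, hr.map ⟨Set.inclusion hAB, id⟩⟩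

namespace RootedTreeDecomp

variable {V ι : Type*} {G : SimpleGraph V} (D : RootedTreeDecomp V ι G)

def badChildren (Z' : Set V) (t : ι) : Set ι :=
  {s | D.IsChild s t ∧ (Z' ∩ (D.subtreeBags s \ D.adhesion s)).Nonempty}

theorem eq_root_of_iterate_parent_eq_self {t : ι} {n : ℕ} (hn : 0 < n)
    (h : D.parent^[n] t = t) : t = D.root := by
  obtain ⟨N, hN⟩ := D.reaches_root t
  obtain ⟨k, hk⟩ := Nat.exists_eq_add_of_le' (Nat.le_mul_of_pos_left N hn)
  have hper : D.parent^[n * N] t = t := (Function.IsPeriodicPt.mul_const h N).eq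
  rw [hk, Function.iterate_add_apply, hN, iterate_parent_root] at hper
  exact hper.symm

theorem eq_of_isChild_of_iterate_parent_eq {s₁ s₂ t : ι} (h₁ : D.IsChild s₁ t)
    (h₂ : D.IsChild s₂ t) {k : ℕ} (hk : D.parent^[k] s₁ = s₂) : s₁ = s₂ := by
  cases k with
  | zero => exact hk
  | succ k =>
    rw [Function.iterate_succ_apply, h₁.2] at hk
    have ht : t = D.root := D.eq_root_of_iterate_parent_eq_self k.succ_pos <| by
      rw [Function.iterate_succ_apply', hk, h₂.2]
    exact absurd (by rw [← hk, ht, iterate_parent_root]) h₂.1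

theorem exists_iterate_parent_eq_of_mem_bag {s : ι} (hs : s ≠ D.root) {v : V}
    (hv : v ∈ D.subtreeBags s \ D.adhesion s) {w : ι} (hw : v ∈ D.bag w) :
    ∃ n, D.parent^[n] w = s := by
  obtain ⟨⟨u, ⟨n, hn⟩, hvu⟩, hvσ⟩ : (∃ u, (∃ n, D.parent^[n] u = s) ∧ v ∈ D.bag u) ∧ _ := by
    simpa [subtreeBags] using hv
  induction n generalizing u with
  | zero =>
    subst hn
    refine D.bag_conn v u hvu hs (fun hvp => hvσ ?_) w hw
    rw [adhesion, if_neg hs]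
    exact ⟨hvu, hvp⟩
  | succ n ih =>
    rw [Function.iterate_succ_apply] at hn
    by_cases hvp : v ∈ D.bag (D.parent u)
    · exact ih (D.parent u) hvp hn
    have hu : u ≠ D.root := by
      rintro rfl
      rw [D.parent_root, iterate_parent_root] at hn
      exact hs hn.symm
    obtain ⟨m, hm⟩ := D.bag_conn v u hvu hu hvp w hw
    exact ⟨n + 1 + m, by rw [Function.iterate_add_apply, hm, Function.iterate_succ_apply, hn]⟩

theorem subsingleton_setOf_isChild_mem_subtreeBags_diff_adhesion (t : ι) (v : V) :
    {s | D.IsChild s t ∧ v ∈ D.subtreeBags s \ D.adhesion s}.Subsingleton := by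
  rintro s₁ ⟨h₁, hv₁⟩ s₂ ⟨h₂, hv₂⟩
  obtain ⟨w, ⟨a, ha⟩, hvw⟩ : ∃ w, (∃ n, D.parent^[n] w = s₁) ∧ v ∈ D.bag w := by
    simpa [subtreeBags] using hv₁.1
  obtain ⟨b, hb⟩ := D.exists_iterate_parent_eq_of_mem_bag h₂.1 hv₂ hvw
  rcases Function.exists_iterate_eq_or_exists_iterate_eq D.parent ha hb with ⟨k, hk⟩ | ⟨k, hk⟩
  · exact D.eq_of_isChild_of_iterate_parent_eq h₁ h₂ hk
  · exact (D.eq_of_isChild_of_iterate_parent_eq h₂ h₁ hk).symm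

theorem badChildren_subset_biUnion (Z' : Set V) (t : ι) :
    D.badChildren Z' t ⊆ ⋃ z ∈ Z', {s | D.IsChild s t ∧ z ∈ D.subtreeBags s \ D.adhesion s} := by
  rintro s ⟨hs, z, hz, hzs⟩
  exact Set.mem_biUnion hz ⟨hs, hzs⟩

theorem finite_badChildren {Z' : Set V} (hZ' : Z'.Finite) (t : ι) :
    (D.badChildren Z' t).Finite :=
  have hsub := D.subsingleton_setOf_isChild_mem_subtreeBags_diff_adhesion t
  (hZ'.biUnion fun z _ => (hsub z).finite).subset (D.badChildren_subset_biUnion Z' t)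

theorem ncard_badChildren_le {Z' : Set V} (hZ' : Z'.Finite) (t : ι) :
    (D.badChildren Z' t).ncard ≤ Z'.ncard := by
  have hsub := D.subsingleton_setOf_isChild_mem_subtreeBags_diff_adhesion t
  calc (D.badChildren Z' t).ncard
      ≤ (⋃ z ∈ Z', {s | D.IsChild s t ∧ z ∈ D.subtreeBags s \ D.adhesion s}).ncard :=
        Set.ncard_le_ncard (D.badChildren_subset_biUnion Z' t)
          (hZ'.biUnion fun z _ => (hsub z).finite)
    _ ≤ 1 * Z'.ncard :=
        hZ'.ncard_biUnion_le_mul fun z _ => (Set.ncard_le_one (hsub z).finite).2 (hsub z)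
    _ = Z'.ncard := one_mul _

theorem exists_mem_badChildren_of_not_sameComp {A Z' : Set V} {t : ι} {u v : V}
    (hcon : ∀ s, D.IsChild s t → u ∈ D.adhesion s → v ∈ D.adhesion s →
      SameComp G (((D.subtreeBags s \ D.adhesion s) ∩ A) ∪ {u, v}) u v)
    (huv : (D.torso t).Adj u v) (hu : u ∈ A \ Z') (hv : v ∈ A \ Z')
    (hsep : ¬ SameComp G (A \ Z') u v) :
    ∃ s ∈ D.badChildren Z' t, s(u, v) ∈ (D.adhesion s).sym2 := by
  obtain hG | ⟨s, hs, huσ, hvσ⟩ := huv.2.2.2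
  · exact absurd ⟨hu, hv, SimpleGraph.Adj.reachable (G := G.induce (A \ Z')) hG⟩ hsep
  refine ⟨s, ⟨hs, ?_⟩, huσ, hvσ⟩
  by_contra hZ'
  refine hsep ((hcon s hs huσ hvσ).mono ?_)
  rintro x (⟨hxγ, hxA⟩ | hx | hx)
  · exact ⟨hxA, fun hxZ' => hZ' ⟨x, hxZ', hxγ⟩⟩
  · exact hx ▸ hu
  · exact hx ▸ hv

end RootedTreeDecomp

theorem few_unsafe_torso_edges_general
    {V ι : Type*} [Fintype V] {G : SimpleGraph V} (D : RootedTreeDecomp V ι G)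
    (h p : ℕ) (Z : Fin p → Set V)
    (hadh : ∀ t : ι, (D.adhesion t).ncard ≤ h)
    (i : Fin p) (Z' : Set V)
    (hcon : ∀ (t : ι) (u v : V), (D.torso t).Adj u v → u ∈ Z i → v ∈ Z i →
      ∀ s : ι, D.IsChild s t → u ∈ D.adhesion s → v ∈ D.adhesion s →
        SameComp G (((D.subtreeBags s \ D.adhesion s) ∩ Z i) ∪ {u, v}) u v) :
    ∀ t : ι,
      {e : Sym2 V | ∃ u v : V, e = s(u, v) ∧ (D.torso t).Adj u v ∧
          u ∈ (Z i ∩ D.bag t) \ Z' ∧ v ∈ (Z i ∩ D.bag t) \ Z' ∧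
          ¬ SameComp G (Z i \ Z') u v}.ncard ≤ h ^ 2 * Z'.ncard := by
  intro t
  calc _ ≤ (⋃ s ∈ D.badChildren Z' t, (D.adhesion s).sym2).ncard :=
        Set.ncard_le_ncard ?_ (Set.toFinite _)
    _ ≤ h ^ 2 * (D.badChildren Z' t).ncard :=
        (D.finite_badChildren Z'.toFinite t).ncard_biUnion_le_mul fun s _ =>
          (Set.ncard_sym2_le (Set.toFinite _)).trans (Nat.pow_le_pow_left (hadh s) 2)
    _ ≤ h ^ 2 * Z'.ncard := Nat.mul_le_mul_left _ (D.ncard_badChildren_le Z'.toFinite t)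
  rintro _ ⟨u, v, rfl, huv, ⟨⟨huZ, -⟩, huZ'⟩, ⟨⟨hvZ, -⟩, hvZ'⟩, hsep⟩
  obtain ⟨s, hs, huvσ⟩ := D.exists_mem_badChildren_of_not_sameComp
    (hcon t u v huv huZ hvZ) huv ⟨huZ, huZ'⟩ ⟨hvZ, hvZ'⟩ hsep
  exact Set.mem_biUnion hs huvσ

/-- Let `(T,β)` be a rooted tree decomposition of `G`, let `Z₁,…,Z_p` be a
partition of `V(G)`, fix `i` and `Z' ⊆ Z_i`, and suppose that for every node `t` and every
edge `uv` of `tor(t)[Z_i ∩ β(t)]`, the vertices `u, v` lie in the same connected component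
of `G[((γ(s) \ σ(s)) ∩ Z_i) ∪ {u,v}]` for every child `s` of `t` with `u,v ∈ σ(s)`.  If all
adhesions have size at most `h`, then for every node `t` the number of edges `uv` of
`tor(t)[(Z_i ∩ β(t)) \ Z']` whose endpoints lie in different connected components of
`G[Z_i \ Z']` is at most `h² · |Z'|`. -/
theorem few_unsafe_torso_edges
    {V ι : Type*} [Fintype V] {G : SimpleGraph V} (D : RootedTreeDecomp V ι G)
    (h p : ℕ) (Z : Fin p → Set V) (hpart : ∀ v : V, ∃! j : Fin p, v ∈ Z j)
    (hadh : ∀ t : ι, (D.adhesion t).ncard ≤ h)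
    (i : Fin p) (Z' : Set V) (hZ' : Z' ⊆ Z i)
    (hcon : ∀ (t : ι) (u v : V), (D.torso t).Adj u v → u ∈ Z i → v ∈ Z i →
      ∀ s : ι, D.IsChild s t → u ∈ D.adhesion s → v ∈ D.adhesion s →
        SameComp G (((D.subtreeBags s \ D.adhesion s) ∩ Z i) ∪ {u, v}) u v) :
    ∀ t : ι,
      {e : Sym2 V | ∃ u v : V, e = s(u, v) ∧ (D.torso t).Adj u v ∧
          u ∈ (Z i ∩ D.bag t) \ Z' ∧ v ∈ (Z i ∩ D.bag t) \ Z' ∧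
          ¬ SameComp G (Z i \ Z') u v}.ncard ≤ h ^ 2 * Z'.ncard :=
  few_unsafe_torso_edges_general D h p Z hadh i Z' hcon
end
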